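/- arXiv:1002.0606 — 3 statements merged into one kernel-verified Lean document; each statement's English description precedes it below -/
import Mathlib

section
/- Let θ₀, θ_R, θ₀', θ_R' ∈ S_{2π} and z ∈ ℂ \ σ(H_{θ₀,θ_R}), and let ψ₁(z,·), ψ₂(z,·) be any basis of the solution space of −u'' + V u = z u on [0,R]. Then the 2×2 matrix with columns γ_{θ₀,θ_R}(ψ₁(z,·)) and γ_{θ₀,θ_R}(ψ₂(z,·)) is invertible, and Λ_{θ₀,θ_R}^{θ₀',θ_R'}(z) = [γ_{θ₀',θ_R'}(ψ₁(z,·)) γ_{θ₀',θ_R'}(ψ₂(z,·))] · [γ_{θ₀,θ_R}(ψ₁(z,·)) γ_{θ₀,θ_R}(ψ₂(z,·))]⁻¹. In particular, the right-hand side is independent of the choice of basis ψ₁, ψ₂. -/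
open MeasureTheory Set Complex Filter Matrix
open scoped Classical

noncomputable section

/-- The strip `S_{2π} = {z ∈ ℂ | 0 ≤ Re z < 2π}`. -/
def S2pi : Set ℂ := {z : ℂ | 0 ≤ z.re ∧ z.re < 2 * Real.pi}

/-- `u` (with derivative `u'`) solves the inhomogeneous Schrödinger equation
`-u'' + V u - z u = f` on `[0,R]`: `u` is differentiable with derivative `u'`
on `[0,R]`, and `u'` is absolutely continuous with `u'' = (V - z) u - f` (a.e.),
encoded in integrated form. -/
def IsSolInhom (R : ℝ) (V : ℝ → ℂ) (z : ℂ) (f u u' : ℝ → ℂ) : Prop :=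
  (∀ x ∈ Icc (0:ℝ) R, HasDerivAt u (u' x) x) ∧
  (∀ x ∈ Icc (0:ℝ) R, u' x = u' 0 + ∫ t in (0:ℝ)..x, ((V t - z) * u t - f t))

/-- `u` (with derivative `u'`) solves the homogeneous equation `-u'' + V u = z u`
on `[0,R]`. -/
def IsSol (R : ℝ) (V : ℝ → ℂ) (z : ℂ) (u u' : ℝ → ℂ) : Prop :=
  IsSolInhom R V z 0 u u'

/-- The boundary trace map `γ_{θ₀,θ_R}(u) ∈ ℂ²`. -/
def bTrace (R : ℝ) (θ0 θR : ℂ) (u u' : ℝ → ℂ) : Fin 2 → ℂ :=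
  ![Complex.cos θ0 * u 0 + Complex.sin θ0 * u' 0,
    Complex.cos θR * u R - Complex.sin θR * u' R]

/-- `z` is an eigenvalue of the Schrödinger operator `H_{θ₀,θ_R}` in `L²((0,R))`.
Since `H_{θ₀,θ_R}` has purely discrete spectrum, the spectrum `σ(H_{θ₀,θ_R})`
coincides with the set of its eigenvalues. -/
def IsEigenvalue (R : ℝ) (V : ℝ → ℂ) (θ0 θR z : ℂ) : Prop :=
  ∃ u u' : ℝ → ℂ, IsSol R V z u u' ∧ bTrace R θ0 θR u u' = 0 ∧
    ∃ x ∈ Icc (0:ℝ) R, u x ≠ 0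

/-- The boundary data map `Λ_{θ₀,θ_R}^{θ₀',θ_R'}(z) : ℂ² → ℂ²`: it sends the
`(θ₀,θ_R)`-boundary data of a solution of `-u'' + V u = z u` to its
`(θ₀',θ_R')`-boundary data.  (It is defined via a choice of solution; for
`z ∉ σ(H_{θ₀,θ_R})` the solution exists and is unique, so the map is well
defined there.) -/
def lambdaMap (R : ℝ) (V : ℝ → ℂ) (θ0 θR θ0' θR' z : ℂ) (c : Fin 2 → ℂ) :
    Fin 2 → ℂ :=
  if h : ∃ u : (ℝ → ℂ) × (ℝ → ℂ), IsSol R V z u.1 u.2 ∧ bTrace R θ0 θR u.1 u.2 = c then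
    bTrace R θ0' θR' h.choose.1 h.choose.2
  else 0

/-- The boundary data map `Λ_{θ₀,θ_R}^{θ₀',θ_R'}(z)` as a `2 × 2` complex matrix. -/
def lambdaMat (R : ℝ) (V : ℝ → ℂ) (θ0 θR θ0' θR' z : ℂ) :
    Matrix (Fin 2) (Fin 2) ℂ :=
  Matrix.of fun i j => lambdaMap R V θ0 θR θ0' θR' z (Pi.single j 1) i

/-- The diagonal matrix `S_{α,β} = diag(sin α, sin β)`. -/
def Smat (α β : ℂ) : Matrix (Fin 2) (Fin 2) ℂ :=
  Matrix.diagonal ![Complex.sin α, Complex.sin β]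

end

noncomputable section

/-- The `2 × 2` matrix `[γ_{θ₀,θ_R}(ψ₁)  γ_{θ₀,θ_R}(ψ₂)]` whose columns are the
`(θ₀,θ_R)`-boundary traces of `ψ₁` and `ψ₂`. -/
def bMat (R : ℝ) (θ0 θR : ℂ) (ψ1 ψ1' ψ2 ψ2' : ℝ → ℂ) : Matrix (Fin 2) (Fin 2) ℂ :=
  Matrix.of fun i j =>
    if j = (0 : Fin 2) then bTrace R θ0 θR ψ1 ψ1' i else bTrace R θ0 θR ψ2 ψ2' i

end

/-! Because `z` is not an eigenvalue, a solution with vanishing `(θ₀,θ_R)`-trace vanishes on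
`[0,R]`, so its derivative vanishes at the endpoints as well; hence the `(θ₀,θ_R)`-trace of a
solution determines its Cauchy data at `0` and `R`, and with it every other trace, which makes
`Λ` well defined. For the basis `ψ₁, ψ₂` the trace of `c₀ψ₁ + c₁ψ₂` is `B c`, where
`B = [γ(ψ₁) γ(ψ₂)]`. If `B c = 0`, the combination has zero Cauchy data at `0`, which forces
`c = 0` since the Wronskian is nonzero. So `B` is invertible, `Λ (B c) = B' c` for all `c`, and
`Λ = B' B⁻¹`. -/

namespace IsSol

variable {R : ℝ} {V : ℝ → ℂ} {z : ℂ} {u u' v v' : ℝ → ℂ}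

lemma continuousOn (h : IsSol R V z u u') : ContinuousOn u (Icc 0 R) :=
  fun x hx => (h.1 x hx).continuousAt.continuousWithinAt

lemma intervalIntegrable_potential_mul (hV : IntegrableOn V (Ioo 0 R))
    (h : IsSol R V z u u') {x : ℝ} (hx : x ∈ Icc 0 R) :
    IntervalIntegrable (fun t => (V t - z) * u t) volume 0 x := by
  have hVz : IntegrableOn (fun t => V t - z) (Icc 0 R) :=
    (integrableOn_Icc_iff_integrableOn_Ioo).2 (hV.sub (integrableOn_const measure_Ioo_lt_top.ne))
  refine ((hVz.mul_continuousOn h.continuousOn isCompact_Icc).mono_set ?_).intervalIntegrable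
  rw [uIcc_of_le hx.1]
  exact Icc_subset_Icc_right hx.2

lemma linearCombination (hV : IntegrableOn V (Ioo 0 R)) (hu : IsSol R V z u u')
    (hv : IsSol R V z v v') (a b : ℂ) :
    IsSol R V z (a • u + b • v) (a • u' + b • v') := by
  refine ⟨fun x hx => ((hu.1 x hx).const_smul a).add ((hv.1 x hx).const_smul b),
    fun x hx => ?_⟩
  have hiu := (hu.intervalIntegrable_potential_mul hV hx).const_mul a
  have hiv := (hv.intervalIntegrable_potential_mul hV hx).const_mul b
  have eu := hu.2 x hx
  have ev := hv.2 x hx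
  simp only [Pi.zero_apply, sub_zero] at eu ev ⊢
  have hint : ∫ t in (0:ℝ)..x, (V t - z) * (a • u + b • v) t =
      a * (∫ t in (0:ℝ)..x, (V t - z) * u t) + b * ∫ t in (0:ℝ)..x, (V t - z) * v t := by
    rw [← intervalIntegral.integral_const_mul, ← intervalIntegral.integral_const_mul,
      ← intervalIntegral.integral_add hiu hiv]
    congr 1 with t
    simp only [Pi.add_apply, Pi.smul_apply, smul_eq_mul]
    ring
  rw [hint]
  simp only [Pi.add_apply, Pi.smul_apply, smul_eq_mul, eu, ev]
  ring

lemma deriv_eq_zero_of_eqOn_zero (hR : 0 < R) (h : IsSol R V z u u')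
    (hu : EqOn u 0 (Icc 0 R)) {x : ℝ} (hx : x ∈ Icc 0 R) : u' x = 0 :=
  (uniqueDiffOn_Icc hR x hx).eq_deriv _ (h.1 x hx).hasDerivWithinAt
    ((hasDerivWithinAt_const x _ (0:ℂ)).congr hu (hu hx))

lemma cauchyData_eq_zero_of_bTrace_eq_zero (hR : 0 < R) {θ0 θR : ℂ}
    (hz : ¬ IsEigenvalue R V θ0 θR z) (h : IsSol R V z u u')
    (htr : bTrace R θ0 θR u u' = 0) :
    u 0 = 0 ∧ u' 0 = 0 ∧ u R = 0 ∧ u' R = 0 := by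
  have hu : EqOn u 0 (Icc 0 R) := fun x hx => by
    by_contra hne
    exact hz ⟨u, u', h, htr, x, hx, hne⟩
  have h0 : (0:ℝ) ∈ Icc 0 R := left_mem_Icc.2 hR.le
  have hR' : R ∈ Icc 0 R := right_mem_Icc.2 hR.le
  exact ⟨hu h0, h.deriv_eq_zero_of_eqOn_zero hR hu h0, hu hR',
    h.deriv_eq_zero_of_eqOn_zero hR hu hR'⟩

end IsSol

lemma bTrace_linearCombination (R : ℝ) (θ0 θR a b : ℂ) (u u' v v' : ℝ → ℂ) :
    bTrace R θ0 θR (a • u + b • v) (a • u' + b • v') =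
      a • bTrace R θ0 θR u u' + b • bTrace R θ0 θR v v' := by
  ext i
  fin_cases i <;> simp [bTrace] <;> ring

lemma bMat_mulVec (R : ℝ) (θ0 θR : ℂ) (ψ1 ψ1' ψ2 ψ2' : ℝ → ℂ) (c : Fin 2 → ℂ) :
    bMat R θ0 θR ψ1 ψ1' ψ2 ψ2' *ᵥ c =
      bTrace R θ0 θR (c 0 • ψ1 + c 1 • ψ2) (c 0 • ψ1' + c 1 • ψ2') := by
  rw [bTrace_linearCombination]
  ext i
  simp [bMat, mulVec, dotProduct, Fin.sum_univ_two, mul_comm]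

section Uniqueness

variable {R : ℝ} {V : ℝ → ℂ} {z θ0 θR : ℂ} {u u' v v' : ℝ → ℂ}

lemma IsSol.bTrace_eq_of_bTrace_eq (hR : 0 < R) (hV : IntegrableOn V (Ioo 0 R))
    (hz : ¬ IsEigenvalue R V θ0 θR z) (hu : IsSol R V z u u') (hv : IsSol R V z v v')
    (h : bTrace R θ0 θR u u' = bTrace R θ0 θR v v') (θ0' θR' : ℂ) :
    bTrace R θ0' θR' u u' = bTrace R θ0' θR' v v' := by
  have hw := hu.linearCombination hV hv 1 (-1)
  obtain ⟨hw0, hw0', hwR, hwR'⟩ := hw.cauchyData_eq_zero_of_bTrace_eq_zero hR hz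
    (by rw [bTrace_linearCombination, h]; simp)
  have hw' : bTrace R θ0' θR' ((1 : ℂ) • u + (-1 : ℂ) • v)
      ((1 : ℂ) • u' + (-1 : ℂ) • v') = 0 := by
    rw [bTrace, hw0, hw0', hwR, hwR']
    simp
  rw [bTrace_linearCombination] at hw'
  simpa [← sub_eq_add_neg, sub_eq_zero] using hw'

lemma lambdaMap_bTrace (hR : 0 < R) (hV : IntegrableOn V (Ioo 0 R))
    (hz : ¬ IsEigenvalue R V θ0 θR z) (hu : IsSol R V z u u') (θ0' θR' : ℂ) :
    lambdaMap R V θ0 θR θ0' θR' z (bTrace R θ0 θR u u') = bTrace R θ0' θR' u u' := by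
  have hex : ∃ w : (ℝ → ℂ) × (ℝ → ℂ),
      IsSol R V z w.1 w.2 ∧ bTrace R θ0 θR w.1 w.2 = bTrace R θ0 θR u u' :=
    ⟨(u, u'), hu, rfl⟩
  rw [lambdaMap, dif_pos hex]
  exact hex.choose_spec.1.bTrace_eq_of_bTrace_eq hR hV hz hu hex.choose_spec.2 θ0' θR'

end Uniqueness

section Basis

variable {R : ℝ} {V : ℝ → ℂ} {z θ0 θR : ℂ} {ψ1 ψ1' ψ2 ψ2' : ℝ → ℂ}

lemma bMat_det_ne_zero (hR : 0 < R) (hV : IntegrableOn V (Ioo 0 R))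
    (hz : ¬ IsEigenvalue R V θ0 θR z) (hψ1 : IsSol R V z ψ1 ψ1') (hψ2 : IsSol R V z ψ2 ψ2')
    (hW : ψ1 0 * ψ2' 0 - ψ1' 0 * ψ2 0 ≠ 0) :
    (bMat R θ0 θR ψ1 ψ1' ψ2 ψ2').det ≠ 0 := by
  intro hdet
  obtain ⟨c, hc_ne, hc⟩ := exists_mulVec_eq_zero_iff.2 hdet
  rw [bMat_mulVec] at hc
  obtain ⟨h0, h0', -, -⟩ :=
    (hψ1.linearCombination hV hψ2 (c 0) (c 1)).cauchyData_eq_zero_of_bTrace_eq_zero hR hz hc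
  simp only [Pi.add_apply, Pi.smul_apply, smul_eq_mul] at h0 h0'
  refine hc_ne (funext fun i => ?_)
  fin_cases i
  · exact (mul_eq_zero.1 (by linear_combination ψ2' 0 * h0 - ψ2 0 * h0' :
      c 0 * (ψ1 0 * ψ2' 0 - ψ1' 0 * ψ2 0) = 0)).resolve_right hW
  · exact (mul_eq_zero.1 (by linear_combination ψ1 0 * h0' - ψ1' 0 * h0 :
      c 1 * (ψ1 0 * ψ2' 0 - ψ1' 0 * ψ2 0) = 0)).resolve_right hW

lemma lambdaMap_bMat_mulVec (hR : 0 < R) (hV : IntegrableOn V (Ioo 0 R))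
    (hz : ¬ IsEigenvalue R V θ0 θR z) (hψ1 : IsSol R V z ψ1 ψ1') (hψ2 : IsSol R V z ψ2 ψ2')
    (θ0' θR' : ℂ) (c : Fin 2 → ℂ) :
    lambdaMap R V θ0 θR θ0' θR' z (bMat R θ0 θR ψ1 ψ1' ψ2 ψ2' *ᵥ c) =
      bMat R θ0' θR' ψ1 ψ1' ψ2 ψ2' *ᵥ c := by
  rw [bMat_mulVec, bMat_mulVec,
    lambdaMap_bTrace hR hV hz (hψ1.linearCombination hV hψ2 (c 0) (c 1))]

end Basis

theorem lambda_eq_trace_matrices_general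
    (R : ℝ) (hR : 0 < R) (V : ℝ → ℂ) (hV : IntegrableOn V (Ioo 0 R))
    (θ0 θR θ0' θR' : ℂ)
    (z : ℂ) (hz : ¬ IsEigenvalue R V θ0 θR z)
    (ψ1 ψ1' ψ2 ψ2' : ℝ → ℂ)
    (hψ1 : IsSol R V z ψ1 ψ1') (hψ2 : IsSol R V z ψ2 ψ2')
    (hW : ψ1 0 * ψ2' 0 - ψ1' 0 * ψ2 0 ≠ 0) :
    IsUnit (bMat R θ0 θR ψ1 ψ1' ψ2 ψ2') ∧
    lambdaMat R V θ0 θR θ0' θR' z =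
      bMat R θ0' θR' ψ1 ψ1' ψ2 ψ2' * (bMat R θ0 θR ψ1 ψ1' ψ2 ψ2')⁻¹ := by
  set B := bMat R θ0 θR ψ1 ψ1' ψ2 ψ2'
  have hB : IsUnit B := (isUnit_iff_isUnit_det B).2 (bMat_det_ne_zero hR hV hz hψ1 hψ2 hW).isUnit
  refine ⟨hB, ?_⟩
  ext i j
  calc lambdaMat R V θ0 θR θ0' θR' z i j
      = lambdaMap R V θ0 θR θ0' θR' z (B *ᵥ (B⁻¹ *ᵥ Pi.single j 1)) i := by
        rw [mulVec_mulVec, mul_nonsing_inv B ((isUnit_iff_isUnit_det B).1 hB), one_mulVec]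
        rfl
    _ = (bMat R θ0' θR' ψ1 ψ1' ψ2 ψ2' * B⁻¹) i j := by
        rw [lambdaMap_bMat_mulVec hR hV hz hψ1 hψ2, mulVec_mulVec, mulVec_single_one]
        rfl

/-- Let `θ₀, θ_R, θ₀', θ_R' ∈ S_{2π}`, `z ∈ ℂ \ σ(H_{θ₀,θ_R})`, and
let `ψ₁, ψ₂` be any basis of the solution space of `-u'' + V u = z u` on `[0,R]`
(i.e. two solutions with nonvanishing Wronskian).  Then the matrix
`[γ_{θ₀,θ_R}(ψ₁)  γ_{θ₀,θ_R}(ψ₂)]` is invertible and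
`Λ_{θ₀,θ_R}^{θ₀',θ_R'}(z) = [γ_{θ₀',θ_R'}(ψ₁)  γ_{θ₀',θ_R'}(ψ₂)] ·
[γ_{θ₀,θ_R}(ψ₁)  γ_{θ₀,θ_R}(ψ₂)]⁻¹`; in particular the right-hand side does not
depend on the choice of the basis `ψ₁, ψ₂`. -/
theorem lambda_eq_trace_matrices
    (R : ℝ) (hR : 0 < R) (V : ℝ → ℂ) (hV : IntegrableOn V (Ioo 0 R))
    (θ0 θR θ0' θR' : ℂ) (hθ0 : θ0 ∈ S2pi) (hθR : θR ∈ S2pi)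
    (hθ0' : θ0' ∈ S2pi) (hθR' : θR' ∈ S2pi)
    (z : ℂ) (hz : ¬ IsEigenvalue R V θ0 θR z)
    (ψ1 ψ1' ψ2 ψ2' : ℝ → ℂ)
    (hψ1 : IsSol R V z ψ1 ψ1') (hψ2 : IsSol R V z ψ2 ψ2')
    (hW : ψ1 0 * ψ2' 0 - ψ1' 0 * ψ2 0 ≠ 0) :
    IsUnit (bMat R θ0 θR ψ1 ψ1' ψ2 ψ2') ∧
    lambdaMat R V θ0 θR θ0' θR' z =
      bMat R θ0' θR' ψ1 ψ1' ψ2 ψ2' * (bMat R θ0 θR ψ1 ψ1' ψ2 ψ2')⁻¹ :=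
  lambda_eq_trace_matrices_general R hR V hV θ0 θR θ0' θR' z hz ψ1 ψ1' ψ2 ψ2' hψ1 hψ2 hW
end

section
/- Let θ₀, θ_R, θ₀', θ_R', δ₀, δ_R, δ₀', δ_R' ∈ [0,2π) with θ₀' − θ₀ ≠ 0 mod π, θ_R' − θ_R ≠ 0 mod π, δ₀' − δ₀ ≠ 0 mod π, and δ_R' − δ_R ≠ 0 mod π. Define the 4×4 complex block matrix A(θ,δ) with 2×2 blocks A_{1,1} = (S_{θ₀'−θ₀, θ_R'−θ_R})⁻¹ S_{δ₀'−θ₀, δ_R'−θ_R}, A_{1,2} = (S_{θ₀'−θ₀, θ_R'−θ_R})⁻¹ (S_{δ₀'−δ₀, δ_R'−δ_R})⁻¹ S_{θ₀−δ₀, θ_R−δ_R}, A_{2,1} = S_{δ₀'−θ₀', δ_R'−θ_R'}, A_{2,2} = (S_{δ₀'−δ₀, δ_R'−δ_R})⁻¹ S_{θ₀'−δ₀, θ_R'−δ_R}. Then A(θ,δ)* J₄ A(θ,δ) = J₄, i.e., A(θ,δ) belongs to 𝒜₄. -/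
open MeasureTheory Set Complex Filter Matrix

noncomputable section

/-- The `4 × 4` block matrix `J₄ = [[0, −I₂], [I₂, 0]]`. -/
def J4 : Matrix (Fin 2 ⊕ Fin 2) (Fin 2 ⊕ Fin 2) ℂ :=
  Matrix.fromBlocks 0 (-1) 1 0

/-- The `4 × 4` block matrix `A(θ,δ)` of Lemma 4.4. -/
def blockA (θ0 θR θ0' θR' δ0 δR δ0' δR' : ℝ) :
    Matrix (Fin 2 ⊕ Fin 2) (Fin 2 ⊕ Fin 2) ℂ :=
  Matrix.fromBlocks
    ((Smat (↑(θ0' - θ0)) (↑(θR' - θR)))⁻¹ * Smat (↑(δ0' - θ0)) (↑(δR' - θR)))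
    ((Smat (↑(θ0' - θ0)) (↑(θR' - θR)))⁻¹ * (Smat (↑(δ0' - δ0)) (↑(δR' - δR)))⁻¹ *
      Smat (↑(θ0 - δ0)) (↑(θR - δR)))
    (Smat (↑(δ0' - θ0')) (↑(δR' - θR')))
    ((Smat (↑(δ0' - δ0)) (↑(δR' - δR)))⁻¹ * Smat (↑(θ0' - δ0)) (↑(θR' - δR)))

end

/-!
All blocks of `A(θ,δ)` are diagonal, so `A(θ,δ)` splits into one real `2 × 2` matrix
`[[p, q], [r, s]]` per coordinate, and `A* J₄ A = J₄` says exactly that each of them has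
determinant `1`. In the coordinate with angles `θ, θ', δ, δ'` the determinant is
`(sin(δ'−θ) sin(θ'−δ) − sin(θ−δ) sin(δ'−θ')) / (sin(θ'−θ) sin(δ'−δ))`, which is `1` by the
trigonometric form of Ptolemy's theorem.
-/

namespace Matrix

variable {n R : Type*} [Fintype n] [DecidableEq n] [CommRing R] [StarRing R]

theorem fromBlocks_conjTranspose_mul_J_mul (A B C D : Matrix n n R) :
    (fromBlocks A B C D)ᴴ * J n R * fromBlocks A B C D =
      fromBlocks (Cᴴ * A - Aᴴ * C) (Cᴴ * B - Aᴴ * D) (Dᴴ * A - Bᴴ * C) (Dᴴ * B - Bᴴ * D) := by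
  simp only [J, fromBlocks_conjTranspose, fromBlocks_multiply, Matrix.mul_zero, Matrix.mul_one,
    Matrix.mul_neg, zero_add, add_zero, Matrix.neg_mul, ← sub_eq_add_neg]

theorem fromBlocks_diagonal_conjTranspose_mul_J_mul_self {p q r s : n → R}
    (hp : IsSelfAdjoint p) (hq : IsSelfAdjoint q) (hr : IsSelfAdjoint r) (hs : IsSelfAdjoint s)
    (hdet : ∀ i, p i * s i - q i * r i = 1) :
    (fromBlocks (diagonal p) (diagonal q) (diagonal r) (diagonal s))ᴴ * J n R *
      fromBlocks (diagonal p) (diagonal q) (diagonal r) (diagonal s) = J n R := by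
  rw [fromBlocks_conjTranspose_mul_J_mul, J]
  simp only [diagonal_conjTranspose, hp.star_eq, hq.star_eq, hr.star_eq, hs.star_eq,
    diagonal_mul_diagonal, diagonal_sub, ← diagonal_zero, ← diagonal_one, diagonal_neg]
  congr <;> funext i
  · ring
  · linear_combination -hdet i
  · linear_combination hdet i
  · ring

end Matrix

theorem Complex.sin_sub_mul_sin_sub (a b c d : ℂ) :
    sin (d - a) * sin (b - c) - sin (a - c) * sin (d - b) = sin (b - a) * sin (d - c) := by
  simp only [sin_sub]
  ring

theorem Complex.star_sin_ofReal (t : ℝ) : star (sin t) = sin t := by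
  rw [← ofReal_sin]
  exact conj_ofReal _

section SinBlock

variable {n : Type*} [Fintype n] [DecidableEq n]

noncomputable def sinDiag (v : n → ℝ) : Matrix n n ℂ :=
  diagonal fun i => Complex.sin (v i)

theorem sinDiag_inv {v : n → ℝ} (hv : ∀ i, Real.sin (v i) ≠ 0) :
    (sinDiag v)⁻¹ = diagonal fun i => (Complex.sin (v i))⁻¹ := by
  refine inv_eq_left_inv ?_
  rw [sinDiag, diagonal_mul_diagonal, ← diagonal_one]
  congr
  funext i
  exact inv_mul_cancel₀ (by exact_mod_cast hv i)

noncomputable def sinBlock (x x' y y' : n → ℝ) : Matrix (n ⊕ n) (n ⊕ n) ℂ :=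
  fromBlocks ((sinDiag (x' - x))⁻¹ * sinDiag (y' - x))
    ((sinDiag (x' - x))⁻¹ * (sinDiag (y' - y))⁻¹ * sinDiag (x - y))
    (sinDiag (y' - x')) ((sinDiag (y' - y))⁻¹ * sinDiag (x' - y))

theorem sinBlock_conjTranspose_mul_J_mul_self {x x' y y' : n → ℝ}
    (hx : ∀ i, Real.sin (x' i - x i) ≠ 0) (hy : ∀ i, Real.sin (y' i - y i) ≠ 0) :
    (sinBlock x x' y y')ᴴ * J n ℂ * sinBlock x x' y y' = J n ℂ := by
  rw [sinBlock, sinDiag_inv (v := x' - x) hx, sinDiag_inv (v := y' - y) hy]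
  simp only [sinDiag, diagonal_mul_diagonal, Pi.sub_apply]
  refine fromBlocks_diagonal_conjTranspose_mul_J_mul_self ?_ ?_ ?_ ?_ fun i => ?_
  iterate 4
    exact funext fun i => by
      simp only [Pi.star_apply, star_mul', star_inv₀, Complex.star_sin_ofReal]
  have hxi : Complex.sin ↑(x' i - x i) ≠ 0 := by exact_mod_cast hx i
  have hyi : Complex.sin ↑(y' i - y i) ≠ 0 := by exact_mod_cast hy i
  field_simp
  push_cast
  linear_combination Complex.sin_sub_mul_sin_sub (x i : ℂ) (x' i) (y i) (y' i)

end SinBlock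

theorem Smat_ofReal (a b : ℝ) : Smat a b = sinDiag ![a, b] := by
  unfold Smat sinDiag
  congr 1
  ext i
  fin_cases i <;> rfl

theorem blockA_eq_sinBlock (θ0 θR θ0' θR' δ0 δR δ0' δR' : ℝ) :
    blockA θ0 θR θ0' θR' δ0 δR δ0' δR' =
      sinBlock ![θ0, θR] ![θ0', θR'] ![δ0, δR] ![δ0', δR'] := by
  simp only [blockA, sinBlock, Smat_ofReal, cons_sub_cons, empty_sub_empty]

theorem blockA_mem_A4_general
    (θ0 θR θ0' θR' δ0 δR δ0' δR' : ℝ)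
    (m1 : ∀ k : ℤ, θ0' - θ0 ≠ k * Real.pi) (m2 : ∀ k : ℤ, θR' - θR ≠ k * Real.pi)
    (m3 : ∀ k : ℤ, δ0' - δ0 ≠ k * Real.pi) (m4 : ∀ k : ℤ, δR' - δR ≠ k * Real.pi) :
    (blockA θ0 θR θ0' θR' δ0 δR δ0' δR')ᴴ * J4 * blockA θ0 θR θ0' θR' δ0 δR δ0' δR' =
      J4 := by
  have sin_ne_zero {t : ℝ} (ht : ∀ k : ℤ, t ≠ k * Real.pi) : Real.sin t ≠ 0 :=
    Real.sin_ne_zero_iff.2 fun k => (ht k).symm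
  rw [blockA_eq_sinBlock]
  exact sinBlock_conjTranspose_mul_J_mul_self
    (Fin.forall_fin_two.2 ⟨sin_ne_zero m1, sin_ne_zero m2⟩)
    (Fin.forall_fin_two.2 ⟨sin_ne_zero m3, sin_ne_zero m4⟩)

/-- For `θ₀, θ_R, θ₀', θ_R', δ₀, δ_R, δ₀', δ_R' ∈ [0,2π)` with
`θ₀' − θ₀ ≠ 0 mod π`, `θ_R' − θ_R ≠ 0 mod π`, `δ₀' − δ₀ ≠ 0 mod π`,
`δ_R' − δ_R ≠ 0 mod π`, the block matrix `A(θ,δ)` satisfies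
`A(θ,δ)* J₄ A(θ,δ) = J₄`, i.e. `A(θ,δ) ∈ 𝒜₄`. -/
theorem blockA_mem_A4
    (θ0 θR θ0' θR' δ0 δR δ0' δR' : ℝ)
    (h1 : θ0 ∈ Ico (0:ℝ) (2 * Real.pi)) (h2 : θR ∈ Ico (0:ℝ) (2 * Real.pi))
    (h3 : θ0' ∈ Ico (0:ℝ) (2 * Real.pi)) (h4 : θR' ∈ Ico (0:ℝ) (2 * Real.pi))
    (h5 : δ0 ∈ Ico (0:ℝ) (2 * Real.pi)) (h6 : δR ∈ Ico (0:ℝ) (2 * Real.pi))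
    (h7 : δ0' ∈ Ico (0:ℝ) (2 * Real.pi)) (h8 : δR' ∈ Ico (0:ℝ) (2 * Real.pi))
    (m1 : ∀ k : ℤ, θ0' - θ0 ≠ k * Real.pi) (m2 : ∀ k : ℤ, θR' - θR ≠ k * Real.pi)
    (m3 : ∀ k : ℤ, δ0' - δ0 ≠ k * Real.pi) (m4 : ∀ k : ℤ, δR' - δR ≠ k * Real.pi) :
    (blockA θ0 θR θ0' θR' δ0 δR δ0' δR')ᴴ * J4 * blockA θ0 θR θ0' θR' δ0 δR δ0' δR' =
      J4 :=
  blockA_mem_A4_general θ0 θR θ0' θR' δ0 δR δ0' δR' m1 m2 m3 m4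
end

section
/- Let θ₀, θ_R, θ₀', θ_R' ∈ S_{2π} with θ₀' − θ₀ ≠ 0 mod π and θ_R' − θ_R ≠ 0 mod π, and let z ∈ ℂ \ (σ(H_{θ₀,θ_R}) ∪ σ(H_{θ₀',θ_R'})). Then (H_{θ₀',θ_R'} − zI)⁻¹ = (H_{θ₀,θ_R} − zI)⁻¹ + [γ_{conj(θ₀'),conj(θ_R')} ∘ ((H_{θ₀,θ_R})* − conj(z)I)⁻¹]* · (S_{θ₀'−θ₀, θ_R'−θ_R})⁻¹ · [γ_{θ₀,θ_R} ∘ (H_{θ₀',θ_R'} − zI)⁻¹], where [·]* denotes the adjoint of the bounded operator L²((0,R); dx) → ℂ² in brackets and (H_{θ₀,θ_R})* is the Hilbert-space adjoint of H_{θ₀,θ_R}. -/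
open MeasureTheory Set Complex Filter Matrix
open scoped Classical

/-- `w ≠ 0 mod π`, i.e. `w` is not an integer multiple of `π`. -/
def NeZeroModPi (w : ℂ) : Prop := ∀ k : ℤ, w ≠ (k : ℂ) * (Real.pi : ℂ)

/-!
`u₁ - u₂` solves the homogeneous equation and `conj w` the equation with potential `V` and
forcing `conj f`, so Green's identity turns `⟨f, u₁ - u₂⟩` into the jump of the Wronskian of
`conj w` and `u₁ - u₂` between `0` and `R`. At each endpoint `conj w` and `u₂` obey the same
boundary condition, which collapses the Wronskian to the `θ'`-trace of `conj w` times the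
`θ`-trace of `u₁`, divided by `sin (θ' - θ)`. Green's identity is integration by parts for
primitives of integrable functions, which reduces to Fubini on a triangle.
-/

section IntegrationByParts

variable {a b : ℝ} {f g F G : ℝ → ℂ}

/-- Fubini on the square `(a, b]²`, split along its diagonal into two triangles. -/
theorem setIntegral_primitive_mul_add_mul_primitive
    (hf : IntegrableOn f (Ioc a b)) (hg : IntegrableOn g (Ioc a b)) :
    (∫ t in Ioc a b, (∫ s in Ioc a t, f s) * g t) + ∫ s in Ioc a b, f s * ∫ t in Ioc a s, g t =
      (∫ s in Ioc a b, f s) * ∫ t in Ioc a b, g t := by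
  set μ := volume.restrict (Ioc a b)
  set S := {p : ℝ × ℝ | p.1 ≤ p.2}
  have hS : MeasurableSet S := measurableSet_le measurable_fst measurable_snd
  have hF : Integrable (fun p : ℝ × ℝ => f p.1 * g p.2) (μ.prod μ) := hf.mul_prod hg
  have lower : ∫ p in S, f p.1 * g p.2 ∂μ.prod μ =
      ∫ t in Ioc a b, (∫ s in Ioc a t, f s) * g t := by
    rw [← MeasureTheory.integral_indicator hS, integral_prod_symm _ (hF.indicator hS)]
    refine setIntegral_congr_fun measurableSet_Ioc fun t ht => ?_
    change ∫ s in Ioc a b, (Iic t).indicator (fun s => f s * g t) s = _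
    rw [setIntegral_indicator measurableSet_Iic, Ioc_inter_Iic, min_eq_right ht.2,
      integral_mul_const]
  have upper : ∫ p in Sᶜ, f p.1 * g p.2 ∂μ.prod μ =
      ∫ s in Ioc a b, f s * ∫ t in Ioc a s, g t := by
    rw [← MeasureTheory.integral_indicator hS.compl, integral_prod _ (hF.indicator hS.compl)]
    refine setIntegral_congr_fun measurableSet_Ioc fun s hs => ?_
    have hind : ∀ t, Sᶜ.indicator (fun p : ℝ × ℝ => f p.1 * g p.2) (s, t) =
        (Iio s).indicator (fun t => f s * g t) t := by
      intro t
      simp [S, indicator, not_le]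
    have hIoo : Ioc a b ∩ Iio s = Ioo a s := by
      ext t
      simp only [mem_inter_iff, mem_Ioc, mem_Iio, mem_Ioo]
      exact ⟨fun h => ⟨h.1.1, h.2⟩, fun h => ⟨⟨h.1, h.2.le.trans hs.2⟩, h.2⟩⟩
    simp only [hind]
    rw [setIntegral_indicator measurableSet_Iio, hIoo, MeasureTheory.integral_const_mul,
      integral_Ioc_eq_integral_Ioo]
  rw [← lower, ← upper, integral_add_compl hS hF]
  exact integral_prod_mul f g

theorem integral_primitive_mul_add_mul_primitive (hab : a ≤ b)
    (hf : IntervalIntegrable f volume a b) (hg : IntervalIntegrable g volume a b) :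
    (∫ t in a..b, (∫ s in a..t, f s) * g t) + ∫ s in a..b, f s * ∫ t in a..s, g t =
      (∫ s in a..b, f s) * ∫ t in a..b, g t := by
  have hf' := (intervalIntegrable_iff_integrableOn_Ioc_of_le hab).1 hf
  have hg' := (intervalIntegrable_iff_integrableOn_Ioc_of_le hab).1 hg
  simp only [intervalIntegral.integral_of_le hab]
  rw [← setIntegral_primitive_mul_add_mul_primitive hf' hg']
  congr 1 <;> refine setIntegral_congr_fun measurableSet_Ioc fun x hx => ?_ <;>
    rw [intervalIntegral.integral_of_le hx.1.le]

theorem continuousOn_of_eq_add_primitive (hab : a ≤ b) (hf : IntervalIntegrable f volume a b)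
    (hF : ∀ x ∈ Icc a b, F x = F a + ∫ t in a..x, f t) : ContinuousOn F (Icc a b) := by
  have hprim := intervalIntegral.continuousOn_primitive_interval' hf left_mem_uIcc
  rw [uIcc_of_le hab] at hprim
  exact (continuousOn_const (c := F a)).add hprim |>.congr hF

theorem integral_mul_eq_sub_integral_of_eq_add_primitive (hab : a ≤ b)
    (hf : IntervalIntegrable f volume a b) (hg : IntervalIntegrable g volume a b)
    (hF : ∀ x ∈ Icc a b, F x = F a + ∫ t in a..x, f t)
    (hG : ∀ x ∈ Icc a b, G x = G a + ∫ t in a..x, g t) :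
    ∫ x in a..b, F x * g x = F b * G b - F a * G a - ∫ x in a..b, f x * G x := by
  have hmem : ∀ {x}, x ∈ uIcc a b → x ∈ Icc a b := by rw [uIcc_of_le hab]; exact id
  have hFg : ∫ x in a..b, F x * g x =
      F a * (∫ x in a..b, g x) + ∫ x in a..b, (∫ t in a..x, f t) * g x := by
    rw [← intervalIntegral.integral_const_mul, ← intervalIntegral.integral_add (hg.const_mul _)
      (hg.continuousOn_mul (intervalIntegral.continuousOn_primitive_interval' hf left_mem_uIcc))]
    exact intervalIntegral.integral_congr fun x hx => by rw [hF x (hmem hx)]; ring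
  have hfG : ∫ x in a..b, f x * G x =
      G a * (∫ x in a..b, f x) + ∫ x in a..b, f x * ∫ t in a..x, g t := by
    rw [← intervalIntegral.integral_const_mul, ← intervalIntegral.integral_add (hf.const_mul _)
      (hf.mul_continuousOn (intervalIntegral.continuousOn_primitive_interval' hg left_mem_uIcc))]
    exact intervalIntegral.integral_congr fun x hx => by rw [hG x (hmem hx)]; ring
  linear_combination hFg + hfG + integral_primitive_mul_add_mul_primitive hab hf hg -
    G b * hF b (right_mem_Icc.2 hab) - (F a + ∫ t in a..b, f t) * hG b (right_mem_Icc.2 hab)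

end IntegrationByParts

def wronskian (u u' v v' : ℝ → ℂ) (x : ℝ) : ℂ := u x * v' x - u' x * v x

section Lagrange

variable {a b : ℝ} {u u' v v' p q : ℝ → ℂ}

theorem eq_add_integral_of_hasDerivAt (hu : ∀ x ∈ Icc a b, HasDerivAt u (u' x) x)
    (hu' : ContinuousOn u' (Icc a b)) : ∀ x ∈ Icc a b, u x = u a + ∫ t in a..x, u' t := by
  intro x hx
  have hsub : uIcc a x ⊆ Icc a b := by
    rw [uIcc_of_le hx.1]
    exact Icc_subset_Icc_right hx.2
  rw [intervalIntegral.integral_eq_sub_of_hasDerivAt (fun y hy => hu y (hsub hy))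
    (hu'.mono hsub).intervalIntegrable]
  ring

/-- Lagrange's identity, with `u'' = q` and `v'' = p` given in integrated form. -/
theorem integral_mul_sub_mul_eq_wronskian_sub (hab : a ≤ b)
    (hu : ∀ x ∈ Icc a b, HasDerivAt u (u' x) x) (hv : ∀ x ∈ Icc a b, HasDerivAt v (v' x) x)
    (hq : IntervalIntegrable q volume a b) (hp : IntervalIntegrable p volume a b)
    (hu' : ∀ x ∈ Icc a b, u' x = u' a + ∫ t in a..x, q t)
    (hv' : ∀ x ∈ Icc a b, v' x = v' a + ∫ t in a..x, p t) :
    ∫ x in a..b, (u x * p x - q x * v x) = wronskian u u' v v' b - wronskian u u' v v' a := by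
  have hu'c := continuousOn_of_eq_add_primitive hab hq hu'
  have hv'c := continuousOn_of_eq_add_primitive hab hp hv'
  have huc : ContinuousOn u (uIcc a b) := fun x hx =>
    (hu x (uIcc_of_le hab ▸ hx)).continuousAt.continuousWithinAt
  have hvc : ContinuousOn v (uIcc a b) := fun x hx =>
    (hv x (uIcc_of_le hab ▸ hx)).continuousAt.continuousWithinAt
  have hup := integral_mul_eq_sub_integral_of_eq_add_primitive hab
    (hu'c.intervalIntegrable_of_Icc hab) hp (eq_add_integral_of_hasDerivAt hu hu'c) hv'
  have hqv := integral_mul_eq_sub_integral_of_eq_add_primitive hab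
    hq (hv'c.intervalIntegrable_of_Icc hab) hu' (eq_add_integral_of_hasDerivAt hv hv'c)
  rw [intervalIntegral.integral_sub (hp.continuousOn_mul huc) (hq.mul_continuousOn hvc), hup]
  unfold wronskian
  linear_combination -hqv

end Lagrange

namespace IsSolInhom

variable {R : ℝ} {V : ℝ → ℂ} {z : ℂ} {f g u u' v v' : ℝ → ℂ}

theorem continuousOn (hu : IsSolInhom R V z f u u') : ContinuousOn u (Icc 0 R) :=
  fun x hx => (hu.1 x hx).continuousAt.continuousWithinAt

theorem intervalIntegrable_secondDeriv (hu : IsSolInhom R V z f u u') (hR : 0 ≤ R)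
    (hV : IntervalIntegrable V volume 0 R) (hf : IntervalIntegrable f volume 0 R) :
    IntervalIntegrable (fun t => (V t - z) * u t - f t) volume 0 R :=
  ((hV.sub intervalIntegrable_const).mul_continuousOn (uIcc_of_le hR ▸ hu.continuousOn)).sub hf

theorem sub (hu : IsSolInhom R V z f u u') (hv : IsSolInhom R V z g v v') (hR : 0 ≤ R)
    (hV : IntervalIntegrable V volume 0 R) (hf : IntervalIntegrable f volume 0 R)
    (hg : IntervalIntegrable g volume 0 R) : IsSolInhom R V z (f - g) (u - v) (u' - v') := by
  refine ⟨fun x hx => (hu.1 x hx).sub (hv.1 x hx), fun x hx => ?_⟩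
  have hsub : uIcc 0 x ⊆ uIcc 0 R := uIcc_subset_uIcc_left (uIcc_of_le hR ▸ hx)
  simp only [Pi.sub_apply]
  rw [hu.2 x hx, hv.2 x hx, add_sub_add_comm, ← intervalIntegral.integral_sub
    ((hu.intervalIntegrable_secondDeriv hR hV hf).mono_set hsub)
    ((hv.intervalIntegrable_secondDeriv hR hV hg).mono_set hsub)]
  congr 1
  exact intervalIntegral.integral_congr fun t _ => by ring

theorem conj {w w' : ℝ → ℂ}
    (hw : IsSolInhom R (fun x => starRingEnd ℂ (V x)) (starRingEnd ℂ z) f w w') :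
    IsSolInhom R V z (fun x => starRingEnd ℂ (f x)) (fun x => starRingEnd ℂ (w x))
      (fun x => starRingEnd ℂ (w' x)) := by
  refine ⟨fun x hx => (hw.1 x hx).star, fun x hx => ?_⟩
  beta_reduce
  rw [hw.2 x hx, map_add, ← intervalIntegral.intervalIntegral_conj]
  simp only [map_sub, map_mul, Complex.conj_conj]

theorem integral_mul_sub_mul_eq_wronskian_sub (hu : IsSolInhom R V z f u u')
    (hv : IsSolInhom R V z g v v') (hR : 0 ≤ R) (hV : IntervalIntegrable V volume 0 R)
    (hf : IntervalIntegrable f volume 0 R) (hg : IntervalIntegrable g volume 0 R) :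
    ∫ x in (0:ℝ)..R, (f x * v x - u x * g x) =
      wronskian u u' v v' R - wronskian u u' v v' 0 := by
  rw [← _root_.integral_mul_sub_mul_eq_wronskian_sub hR hu.1 hv.1
    (hu.intervalIntegrable_secondDeriv hR hV hf) (hv.intervalIntegrable_secondDeriv hR hV hg)
    hu.2 hv.2]
  exact intervalIntegral.integral_congr fun x _ => by ring

end IsSolInhom

section BoundaryConditions

variable {R : ℝ} {θ0 θR θ0' θR' : ℂ} {u u' v v' w w' : ℝ → ℂ}

theorem starRingEnd_bTrace (i : Fin 2) :
    starRingEnd ℂ (bTrace R (starRingEnd ℂ θ0) (starRingEnd ℂ θR) w w' i) =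
      bTrace R θ0 θR (fun x => starRingEnd ℂ (w x)) (fun x => starRingEnd ℂ (w' x)) i := by
  fin_cases i <;> simp [bTrace, Complex.cos_conj, Complex.sin_conj]

/-- `x` and `v` are parallel, both being annihilated by `(cos α, sin α)`; what remains is the
identity `(e_β·x)(e_α·u) - (e_α·x)(e_β·u) = sin (α - β) (x₁u₂ - x₂u₁)` with `e_θ = (cos θ, sin θ)`. -/
theorem mul_sub_sub_mul_sub_eq_of_boundary {α β x₁ x₂ u₁ u₂ v₁ v₂ : ℂ}
    (hx : cos α * x₁ + sin α * x₂ = 0) (hv : cos α * v₁ + sin α * v₂ = 0)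
    (hu : cos β * u₁ + sin β * u₂ = 0) (hs : sin (β - α) ≠ 0) :
    x₁ * (u₂ - v₂) - x₂ * (u₁ - v₁) =
      -((cos β * x₁ + sin β * x₂) * ((cos α * u₁ + sin α * u₂) / sin (β - α))) := by
  have hxv : x₁ * v₂ - x₂ * v₁ = 0 := by
    linear_combination (cos α * v₂ - sin α * v₁) * hx + (sin α * x₁ - cos α * x₂) * hv -
      (x₁ * v₂ - x₂ * v₁) * sin_sq_add_cos_sq α
  field_simp
  rw [sin_sub]
  linear_combination (cos β * sin α - sin β * cos α) * hxv + (cos α * x₁ + sin α * x₂) * hu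

theorem wronskian_sub_left_eq_of_bTrace (hw : bTrace R θ0 θR w w' 0 = 0)
    (hv : bTrace R θ0 θR v v' 0 = 0) (hu : bTrace R θ0' θR' u u' 0 = 0)
    (hs : sin (θ0' - θ0) ≠ 0) :
    wronskian w w' (u - v) (u' - v') 0 =
      -(bTrace R θ0' θR' w w' 0 * (bTrace R θ0 θR u u' 0 / sin (θ0' - θ0))) := by
  simp only [bTrace, Matrix.cons_val_zero] at hw hv hu ⊢
  exact mul_sub_sub_mul_sub_eq_of_boundary hw hv hu hs

/-- At the right endpoint the trace involves `-u'`, which reverses the sign of the Wronskian. -/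
theorem wronskian_sub_right_eq_of_bTrace (hw : bTrace R θ0 θR w w' 1 = 0)
    (hv : bTrace R θ0 θR v v' 1 = 0) (hu : bTrace R θ0' θR' u u' 1 = 0)
    (hs : sin (θR' - θR) ≠ 0) :
    wronskian w w' (u - v) (u' - v') R =
      bTrace R θ0' θR' w w' 1 * (bTrace R θ0 θR u u' 1 / sin (θR' - θR)) := by
  simp only [bTrace, Matrix.cons_val_one, Matrix.cons_val_fin_one] at hw hv hu ⊢
  have key := mul_sub_sub_mul_sub_eq_of_boundary (x₁ := w R) (x₂ := -w' R) (u₁ := u R)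
    (u₂ := -u' R) (v₁ := v R) (v₂ := -v' R)
    (by linear_combination hw) (by linear_combination hv) (by linear_combination hu) hs
  simp only [wronskian, Pi.sub_apply]
  linear_combination -key

end BoundaryConditions

theorem sin_ne_zero_of_neZeroModPi {w : ℂ} (hw : NeZeroModPi w) : sin w ≠ 0 := fun h =>
  let ⟨k, hk⟩ := Complex.sin_eq_zero_iff.1 h
  hw k hk

/-- The resolvents are encoded by the boundary value problems they solve: `u1`, `u2` and `w`
are `(H_{θ₀',θ_R'} − z)⁻¹ g`, `(H_{θ₀,θ_R} − z)⁻¹ g` and `((H_{θ₀,θ_R})* − conj z)⁻¹ f`, and the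
operator identity is tested against `f` in the `L²` pairing (linear in the second slot). -/
theorem krein_resolvent_identity_first_form_general
    (R : ℝ) (hR : 0 < R) (V : ℝ → ℂ) (hV : IntegrableOn V (Ioo 0 R))
    (θ0 θR θ0' θR' : ℂ)
    (hm0 : NeZeroModPi (θ0' - θ0)) (hmR : NeZeroModPi (θR' - θR))
    (z : ℂ)
    (f g : ℝ → ℂ)
    (hf : MemLp f 2 (volume.restrict (Ioo (0:ℝ) R)))
    (hg : MemLp g 2 (volume.restrict (Ioo (0:ℝ) R)))
    (u1 u1' u2 u2' w w' : ℝ → ℂ)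
    (hu1 : IsSolInhom R V z g u1 u1') (hu1bc : bTrace R θ0' θR' u1 u1' = 0)
    (hu2 : IsSolInhom R V z g u2 u2') (hu2bc : bTrace R θ0 θR u2 u2' = 0)
    (hw : IsSolInhom R (fun x => (starRingEnd ℂ) (V x)) ((starRingEnd ℂ) z) f w w')
    (hwbc : bTrace R ((starRingEnd ℂ) θ0) ((starRingEnd ℂ) θR) w w' = 0) :
    ∫ x in Ioo (0:ℝ) R, (starRingEnd ℂ) (f x) * u1 x =
      (∫ x in Ioo (0:ℝ) R, (starRingEnd ℂ) (f x) * u2 x) +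
        ((starRingEnd ℂ)
            (bTrace R ((starRingEnd ℂ) θ0') ((starRingEnd ℂ) θR') w w' 0) *
          (bTrace R θ0 θR u1 u1' 0 / Complex.sin (θ0' - θ0)) +
        (starRingEnd ℂ)
            (bTrace R ((starRingEnd ℂ) θ0') ((starRingEnd ℂ) θR') w w' 1) *
          (bTrace R θ0 θR u1 u1' 1 / Complex.sin (θR' - θR))) := by
  have toInterval : ∀ {h : ℝ → ℂ}, IntegrableOn h (Ioo 0 R) → IntervalIntegrable h volume 0 R :=
    (intervalIntegrable_iff_integrableOn_Ioo_of_le hR.le).2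
  have hVi := toInterval hV
  have hfi : IntervalIntegrable (fun x => starRingEnd ℂ (f x)) volume 0 R :=
    toInterval (hf.star.integrable one_le_two)
  have hgi := toInterval (hg.integrable one_le_two)
  have hdiff : IsSolInhom R V z 0 (u1 - u2) (u1' - u2') := by
    simpa only [sub_self] using hu1.sub hu2 hR.le hVi hgi hgi
  have green := hw.conj.integral_mul_sub_mul_eq_wronskian_sub hdiff hR.le hVi
    hfi intervalIntegrable_const
  have hwbc' : ∀ i, bTrace R θ0 θR (fun x => starRingEnd ℂ (w x))
      (fun x => starRingEnd ℂ (w' x)) i = 0 := fun i => by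
    rw [← starRingEnd_bTrace, hwbc, Pi.zero_apply, map_zero]
  have left := wronskian_sub_left_eq_of_bTrace (hwbc' 0) (congrFun hu2bc 0) (congrFun hu1bc 0)
    (sin_ne_zero_of_neZeroModPi hm0)
  have right := wronskian_sub_right_eq_of_bTrace (hwbc' 1) (congrFun hu2bc 1) (congrFun hu1bc 1)
    (sin_ne_zero_of_neZeroModPi hmR)
  have hfu : ∀ {u}, ContinuousOn u (Icc 0 R) →
      IntervalIntegrable (fun x => starRingEnd ℂ (f x) * u x) volume 0 R := fun hu =>
    hfi.mul_continuousOn (uIcc_of_le hR.le ▸ hu)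
  simp only [← integral_Ioc_eq_integral_Ioo, ← intervalIntegral.integral_of_le hR.le,
    starRingEnd_bTrace]
  rw [← sub_eq_iff_eq_add', ← intervalIntegral.integral_sub (hfu hu1.continuousOn)
    (hfu hu2.continuousOn)]
  simp only [Pi.sub_apply, Pi.zero_apply, mul_zero, sub_zero, mul_sub] at green
  linear_combination green + right - left

/-- The resolvent identity
`(H_{θ₀',θ_R'} − z)⁻¹ = (H_{θ₀,θ_R} − z)⁻¹
  + [γ_{conj θ₀',conj θ_R'} ((H_{θ₀,θ_R})* − conj z)⁻¹]* S_{θ₀'−θ₀,θ_R'−θ_R}⁻¹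
    [γ_{θ₀,θ_R} (H_{θ₀',θ_R'} − z)⁻¹]`,
stated in the equivalent scalar form obtained by pairing with arbitrary
`f, g ∈ L²((0,R))` (inner products linear in the second argument):
`⟨f, (H_{θ₀',θ_R'} − z)⁻¹ g⟩_{L²} = ⟨f, (H_{θ₀,θ_R} − z)⁻¹ g⟩_{L²}
  + ⟨γ_{conj θ₀',conj θ_R'} ((H_{θ₀,θ_R})* − conj z)⁻¹ f,
      S_{θ₀'−θ₀,θ_R'−θ_R}⁻¹ γ_{θ₀,θ_R} (H_{θ₀',θ_R'} − z)⁻¹ g⟩_{ℂ²}`.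
Resolvents are encoded by their defining boundary value problems: `u₁`, `u₂`, `w`
are respectively `(H_{θ₀',θ_R'} − z)⁻¹ g`, `(H_{θ₀,θ_R} − z)⁻¹ g` and
`((H_{θ₀,θ_R})* − conj z)⁻¹ f`, the adjoint `(H_{θ₀,θ_R})*` acting as
`w ↦ −w'' + conj V w` with boundary condition `γ_{conj θ₀,conj θ_R}(w) = 0`. -/
theorem krein_resolvent_identity_first_form
    (R : ℝ) (hR : 0 < R) (V : ℝ → ℂ) (hV : IntegrableOn V (Ioo 0 R))
    (θ0 θR θ0' θR' : ℂ)
    (hθ0 : θ0 ∈ S2pi) (hθR : θR ∈ S2pi) (hθ0' : θ0' ∈ S2pi) (hθR' : θR' ∈ S2pi)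
    (hm0 : NeZeroModPi (θ0' - θ0)) (hmR : NeZeroModPi (θR' - θR))
    (z : ℂ) (hz : ¬ IsEigenvalue R V θ0 θR z) (hz' : ¬ IsEigenvalue R V θ0' θR' z)
    (f g : ℝ → ℂ)
    (hf : MemLp f 2 (volume.restrict (Ioo (0:ℝ) R)))
    (hg : MemLp g 2 (volume.restrict (Ioo (0:ℝ) R)))
    (u1 u1' u2 u2' w w' : ℝ → ℂ)
    (hu1 : IsSolInhom R V z g u1 u1') (hu1bc : bTrace R θ0' θR' u1 u1' = 0)
    (hu2 : IsSolInhom R V z g u2 u2') (hu2bc : bTrace R θ0 θR u2 u2' = 0)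
    (hw : IsSolInhom R (fun x => (starRingEnd ℂ) (V x)) ((starRingEnd ℂ) z) f w w')
    (hwbc : bTrace R ((starRingEnd ℂ) θ0) ((starRingEnd ℂ) θR) w w' = 0) :
    ∫ x in Ioo (0:ℝ) R, (starRingEnd ℂ) (f x) * u1 x =
      (∫ x in Ioo (0:ℝ) R, (starRingEnd ℂ) (f x) * u2 x) +
        ((starRingEnd ℂ)
            (bTrace R ((starRingEnd ℂ) θ0') ((starRingEnd ℂ) θR') w w' 0) *
          (bTrace R θ0 θR u1 u1' 0 / Complex.sin (θ0' - θ0)) +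
        (starRingEnd ℂ)
            (bTrace R ((starRingEnd ℂ) θ0') ((starRingEnd ℂ) θR') w w' 1) *
          (bTrace R θ0 θR u1 u1' 1 / Complex.sin (θR' - θR))) :=
  krein_resolvent_identity_first_form_general R hR V hV θ0 θR θ0' θR' hm0 hmR z f g hf hg u1 u1' u2
    u2' w w' hu1 hu1bc hu2 hu2bc hw hwbc
end
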